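/- arXiv:2310.06952 — 6 statements merged into one kernel-verified Lean document; each statement's English description precedes it below -/
import Mathlib

section
/- In the nonsymmetric generalized Golub–Kahan decomposition, the matrix L = VᵀMV is unit lower triangular, and Bᵀ Lᵀ = H, so that Bᵀ and Lᵀ form an LU factorization of the upper Hessenberg matrix H (with unit upper triangular factor Lᵀ). -/
open Matrix

/-- In the nonsymmetric generalized Golub–Kahan decomposition, the matrix
`L = VᵀMV` is unit lower triangular, and `Bᵀ Lᵀ = H`, so that `Bᵀ` and `Lᵀ`
form an LU factorization of the upper Hessenberg matrix `H`. -/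
theorem nsGKB_L_unit_lower_triangular_and_LU
    {m n k : ℕ} (M : Matrix (Fin m) (Fin m) ℝ) (A : Matrix (Fin m) (Fin n) ℝ)
    (Q : Matrix (Fin n) (Fin (k + 1)) ℝ) (V : Matrix (Fin m) (Fin (k + 1)) ℝ)
    (B H : Matrix (Fin (k + 1)) (Fin (k + 1)) ℝ)
    (q : Fin n → ℝ) (βk1 : ℝ)
    (α : Fin (k + 1) → ℝ) (βs : Fin k → ℝ)
    (hα : ∀ i, 0 < α i)
    (hBdiag : ∀ i, B i i = α i)
    (hBsuper : ∀ i : Fin k, B i.castSucc i.succ = βs i)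
    (hBzero : ∀ i j : Fin (k + 1), ¬(i = j ∨ (i : ℕ) + 1 = (j : ℕ)) → B i j = 0)
    (hHess : ∀ i j : Fin (k + 1), (j : ℕ) + 1 < (i : ℕ) → H i j = 0)
    (hHsub : ∀ i : Fin k, H i.succ i.castSucc = βs i)
    (hAQ : A * Q = M * V * B)
    (hAV : Aᵀ * V = Q * H +
      Matrix.of (fun i j => βk1 * q i * (if j = Fin.last k then (1 : ℝ) else 0)))
    (hQQ : Qᵀ * Q = 1)
    (hQq : Qᵀ *ᵥ q = 0)
    (hdiag : ∀ i, (Vᵀ * M * V) i i = 1)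
    (hlow : ∀ i j : Fin (k + 1), i < j → (Vᵀ * M * V) i j = 0) :
    (∀ i, (Vᵀ * M * V) i i = 1) ∧
    (∀ i j : Fin (k + 1), i < j → (Vᵀ * M * V) i j = 0) ∧
    Bᵀ * (Vᵀ * M * V)ᵀ = H := by
  refine ⟨hdiag, hlow, ?_⟩
  have hz : Qᵀ * Matrix.of (fun i j => βk1 * q i *
      (if j = Fin.last k then (1 : ℝ) else 0)) = 0 := by
    ext a b
    have hq : ∑ i, Q i a * q i = 0 := by
      have := congrFun hQq a
      simpa [Matrix.mulVec, dotProduct, Matrix.transpose_apply] using this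
    simp only [Matrix.mul_apply, Matrix.of_apply, Matrix.transpose_apply,
      Matrix.zero_apply]
    calc ∑ i, Q i a * (βk1 * q i * (if b = Fin.last k then (1 : ℝ) else 0))
        = (∑ i, Q i a * q i) * (βk1 * (if b = Fin.last k then (1 : ℝ) else 0)) := by
          rw [Finset.sum_mul]; congr 1; funext i; ring
      _ = 0 := by rw [hq, zero_mul]
  have h1 : Qᵀ * (Aᵀ * V) = H := by
    rw [hAV, Matrix.mul_add, ← Matrix.mul_assoc, hQQ, Matrix.one_mul, hz, add_zero]
  calc Bᵀ * (Vᵀ * M * V)ᵀ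
      = (M * V * B)ᵀ * V := by
        simp [Matrix.transpose_mul, Matrix.mul_assoc]
    _ = (A * Q)ᵀ * V := by rw [hAQ]
    _ = Qᵀ * (Aᵀ * V) := by simp [Matrix.transpose_mul, Matrix.mul_assoc]
    _ = H := h1
end

section
/- Given the complete nonsymmetric Golub–Kahan decomposition AQ = MVB, AᵀV = QH with QᵀQ = I, Q square orthogonal, and L := VᵀMV unit lower triangular with BᵀLᵀ = H, the Schur complement satisfies S = AᵀM⁻¹A = Q(HB)Qᵀ, and H_S := HB is upper Hessenberg. -/
open Matrix

/-- Given the complete nonsymmetric Golub–Kahan decomposition `AQ = MVB`,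
`AᵀV = QH` with `Q` square orthogonal and `L = VᵀMV` unit lower triangular with
`BᵀLᵀ = H`, the Schur complement satisfies `S = AᵀM⁻¹A = Q(HB)Qᵀ`, and
`H_S = HB` is upper Hessenberg. -/
theorem nsGKB_schur_hessenberg
    {m n : ℕ} (M : Matrix (Fin m) (Fin m) ℝ) (A : Matrix (Fin m) (Fin n) ℝ)
    (Q B H : Matrix (Fin n) (Fin n) ℝ) (V : Matrix (Fin m) (Fin n) ℝ)
    (hM : ∀ x : Fin m → ℝ, x ≠ 0 → 0 < x ⬝ᵥ (M *ᵥ x))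
    (hA : A.rank = n)
    (hQ : Qᵀ * Q = 1)
    (hBbidiag : ∀ i j : Fin n, ¬(i = j ∨ (i : ℕ) + 1 = (j : ℕ)) → B i j = 0)
    (hBunit : IsUnit B)
    (hHess : ∀ i j : Fin n, (j : ℕ) + 1 < (i : ℕ) → H i j = 0)
    (hAQ : A * Q = M * V * B)
    (hAV : Aᵀ * V = Q * H)
    (hLdiag : ∀ i, (Vᵀ * M * V) i i = 1)
    (hLlow : ∀ i j : Fin n, i < j → (Vᵀ * M * V) i j = 0)
    (hLU : Bᵀ * (Vᵀ * M * V)ᵀ = H) :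
    Aᵀ * M⁻¹ * A = Q * (H * B) * Qᵀ ∧
      (∀ i j : Fin n, (j : ℕ) + 1 < (i : ℕ) → (H * B) i j = 0) := by
  have hMunit : IsUnit M := by
    rw [← Matrix.mulVec_injective_iff_isUnit]
    intro x y hxy
    by_contra hne
    have hz : x - y ≠ 0 := sub_ne_zero.mpr hne
    have h0 : M *ᵥ (x - y) = 0 := by
      rw [Matrix.mulVec_sub, hxy, sub_self]
    have := hM (x - y) hz
    rw [h0, dotProduct_zero] at this
    exact lt_irrefl 0 this
  have hMinv : M⁻¹ * M = 1 := Matrix.nonsing_inv_mul M ((Matrix.isUnit_iff_isUnit_det M).mp hMunit)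
  have hQQT : Q * Qᵀ = 1 := mul_eq_one_comm.mp hQ
  constructor
  · have hA' : A = M * V * B * Qᵀ := by
      calc A = A * Q * Qᵀ := by rw [Matrix.mul_assoc, hQQT, Matrix.mul_one]
        _ = M * V * B * Qᵀ := by rw [hAQ]
    have h1 : M⁻¹ * A = V * B * Qᵀ := by
      rw [hA']
      calc M⁻¹ * (M * V * B * Qᵀ) = (M⁻¹ * M) * (V * B * Qᵀ) := by
            simp only [Matrix.mul_assoc]
        _ = V * B * Qᵀ := by rw [hMinv, Matrix.one_mul]
    calc Aᵀ * M⁻¹ * A = Aᵀ * (M⁻¹ * A) := by rw [Matrix.mul_assoc]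
      _ = Aᵀ * (V * B * Qᵀ) := by rw [h1]
      _ = (Aᵀ * V) * (B * Qᵀ) := by simp only [Matrix.mul_assoc]
      _ = Q * (H * B) * Qᵀ := by rw [hAV]; simp only [Matrix.mul_assoc]
  · intro i j hij
    rw [Matrix.mul_apply]
    apply Finset.sum_eq_zero
    intro k _
    by_cases hk : k = j ∨ (k : ℕ) + 1 = (j : ℕ)
    · have hHik : H i k = 0 := by
        apply hHess
        rcases hk with h | h
        · subst h; exact hij
        · omega
      rw [hHik, zero_mul]
    · rw [hBbidiag k j hk, mul_zero]
end

section
/- Given the complete (k = n) nonsymmetric Golub–Kahan decomposition with β₁ = ‖b‖ and q₁ = b/β₁, the vectors u = Vz with z = β₁ L^{-T} B^{-T} e₁ and p = Qy with y = -B⁻¹z solve the saddle point system Mu + Ap = 0, Aᵀu = b. -/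
open Matrix

/-- Given the complete nonsymmetric Golub–Kahan decomposition with `β₁ = ‖b‖`
and `q₁ = b/β₁`, the vectors `u = Vz` with `z = β₁ L⁻ᵀ B⁻ᵀ e₁` and `p = Qy`
with `y = -B⁻¹ z` solve the saddle point system `Mu + Ap = 0`, `Aᵀu = b`. -/
theorem nsGKB_solution
    {m n : ℕ} (M : Matrix (Fin m) (Fin m) ℝ) (A : Matrix (Fin m) (Fin (n + 1)) ℝ)
    (Q B H : Matrix (Fin (n + 1)) (Fin (n + 1)) ℝ) (V : Matrix (Fin m) (Fin (n + 1)) ℝ)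
    (b : Fin (n + 1) → ℝ) (β₁ : ℝ)
    (hM : ∀ x : Fin m → ℝ, x ≠ 0 → 0 < x ⬝ᵥ (M *ᵥ x))
    (hA : A.rank = n + 1)
    (hb : b ≠ 0)
    (hβ₁ : β₁ = Real.sqrt (b ⬝ᵥ b))
    (hq₁ : Q *ᵥ Pi.single (0 : Fin (n + 1)) β₁ = b)
    (hQ : Qᵀ * Q = 1)
    (hBbidiag : ∀ i j : Fin (n + 1), ¬(i = j ∨ (i : ℕ) + 1 = (j : ℕ)) → B i j = 0)
    (hBunit : IsUnit B)
    (hHess : ∀ i j : Fin (n + 1), (j : ℕ) + 1 < (i : ℕ) → H i j = 0)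
    (hHunit : IsUnit H)
    (hAQ : A * Q = M * V * B)
    (hAV : Aᵀ * V = Q * H)
    (hLdiag : ∀ i, (Vᵀ * M * V) i i = 1)
    (hLlow : ∀ i j : Fin (n + 1), i < j → (Vᵀ * M * V) i j = 0)
    (hLU : Bᵀ * (Vᵀ * M * V)ᵀ = H) :
    M *ᵥ (V *ᵥ (β₁ • ((Vᵀ * M * V)ᵀ⁻¹ *ᵥ (Bᵀ⁻¹ *ᵥ Pi.single (0 : Fin (n + 1)) 1))))
      + A *ᵥ (Q *ᵥ (-(B⁻¹ *ᵥ (β₁ • ((Vᵀ * M * V)ᵀ⁻¹ *ᵥ (Bᵀ⁻¹ *ᵥ Pi.single (0 : Fin (n + 1)) 1)))))) = 0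
    ∧ Aᵀ *ᵥ (V *ᵥ (β₁ • ((Vᵀ * M * V)ᵀ⁻¹ *ᵥ (Bᵀ⁻¹ *ᵥ Pi.single (0 : Fin (n + 1)) 1)))) = b := by
  set L := (Vᵀ * M * V)ᵀ with hL
  set z := β₁ • (L⁻¹ *ᵥ (Bᵀ⁻¹ *ᵥ Pi.single (0 : Fin (n + 1)) 1)) with hz
  have hBdet : IsUnit B.det := (isUnit_iff_isUnit_det B).mp hBunit
  have hBtdet : IsUnit Bᵀ.det := by rwa [det_transpose]
  have hLdet : IsUnit L.det := by
    have hdet : Bᵀ.det * L.det = H.det := by rw [← det_mul, hLU]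
    have hH : IsUnit H.det := (isUnit_iff_isUnit_det H).mp hHunit
    rw [← hdet] at hH
    exact isUnit_of_mul_isUnit_right hH
  have hBB : B * B⁻¹ = 1 := mul_nonsing_inv B hBdet
  have hBtBt : Bᵀ * Bᵀ⁻¹ = 1 := mul_nonsing_inv Bᵀ hBtdet
  have hLL : L * L⁻¹ = 1 := mul_nonsing_inv L hLdet
  have hHz : H *ᵥ z = Pi.single (0 : Fin (n + 1)) β₁ := by
    rw [hz, ← hLU, mulVec_smul, mulVec_mulVec, Matrix.mul_assoc, ← mulVec_mulVec, mulVec_mulVec,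
      hLL, Matrix.mul_one, mulVec_mulVec, hBtBt, one_mulVec]
    funext i
    by_cases h : i = 0 <;> simp [h, Pi.single_apply]
  constructor
  · rw [mulVec_mulVec, mulVec_neg, mulVec_neg, mulVec_mulVec, mulVec_mulVec, hAQ,
      Matrix.mul_assoc (M * V) B B⁻¹, hBB, Matrix.mul_one]
    ring_nf
  · rw [mulVec_mulVec, hAV, ← mulVec_mulVec, hHz, hq₁]
end

section
/- In the extended nonsymmetric GKB, if V̄ = [V₁ V₂] ∈ ℝ^{m×m} extends V₁ so that L_m = V̄ᵀMV̄ is block lower triangular with blocks L₁₁ = V₁ᵀMV₁, L₂₁ = V₂ᵀMV₁, L₂₂ = V₂ᵀMV₂, and AᵀV̄ = Q[H 0], AQ = MV̄[B; 0], then L₂₁B = 0; consequently, since B is invertible, L₂₁ = 0. -/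
open Matrix

/-- In the extended nonsymmetric GKB with `V̄ = [V₁ V₂]` such that
`L_m = V̄ᵀMV̄` is block lower triangular (`V₁ᵀMV₂ = 0`), `AᵀV̄ = Q[H 0]` and
`AQ = MV̄[B; 0]`, one has `L₂₁ B = 0`, and hence `L₂₁ = 0` since `B` is invertible. -/
theorem nsGKB_extension_L21_zero
    {m n p : ℕ} (M : Matrix (Fin m) (Fin m) ℝ) (A : Matrix (Fin m) (Fin n) ℝ)
    (Q B H : Matrix (Fin n) (Fin n) ℝ)
    (V₁ : Matrix (Fin m) (Fin n) ℝ) (V₂ : Matrix (Fin m) (Fin p) ℝ)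
    (hM : ∀ x : Fin m → ℝ, x ≠ 0 → 0 < x ⬝ᵥ (M *ᵥ x))
    (hA : A.rank = n)
    (hQ : Qᵀ * Q = 1)
    (hBbidiag : ∀ i j : Fin n, ¬(i = j ∨ (i : ℕ) + 1 = (j : ℕ)) → B i j = 0)
    (hBunit : IsUnit B)
    (hHess : ∀ i j : Fin n, (j : ℕ) + 1 < (i : ℕ) → H i j = 0)
    (hL11B : (V₁ᵀ * M * V₁) * B = Hᵀ)
    (hblock : V₁ᵀ * M * V₂ = 0)
    (hAQ : A * Q = M * V₁ * B)
    (hAV₁ : Aᵀ * V₁ = Q * H)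
    (hAV₂ : Aᵀ * V₂ = 0) :
    (V₂ᵀ * M * V₁) * B = 0 ∧ V₂ᵀ * M * V₁ = 0 := by
  have h1 : (V₂ᵀ * M * V₁) * B = 0 := by
    have : V₂ᵀ * (A * Q) = V₂ᵀ * (M * V₁ * B) := by rw [hAQ]
    have h2 : V₂ᵀ * A = 0 := by
      have := congrArg Matrix.transpose hAV₂
      simpa [Matrix.transpose_mul] using this
    calc (V₂ᵀ * M * V₁) * B = V₂ᵀ * (M * V₁ * B) := by
          simp [Matrix.mul_assoc]
      _ = V₂ᵀ * (A * Q) := by rw [hAQ]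
      _ = (V₂ᵀ * A) * Q := by simp [Matrix.mul_assoc]
      _ = 0 := by rw [h2, Matrix.zero_mul]
  refine ⟨h1, ?_⟩
  obtain ⟨u, hu⟩ := hBunit
  rw [← hu] at h1
  calc V₂ᵀ * M * V₁
      = (V₂ᵀ * M * V₁ * (u : Matrix (Fin n) (Fin n) ℝ)) * (↑u⁻¹ : Matrix (Fin n) (Fin n) ℝ) := by
        rw [Matrix.mul_assoc (V₂ᵀ * M * V₁)]
        norm_cast
        simp
    _ = 0 := by rw [h1, Matrix.zero_mul]
end

section
/- Let u_k = V_k z_k with z_k = β₁ L_k^{-T} B_k^{-T} e₁ be the k-th iterate of the nsCRAIG algorithm. Then the residual satisfies b - Aᵀu_k = -β_{k+1} q_{k+1} (e_kᵀ z_k), and hence ‖b - Aᵀu_k‖₂ = β_{k+1} |ζ_k| where ζ_k is the last entry of z_k. -/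
open Matrix

/-- Residual formula for the k-th nsCRAIG iterate `u_k = V_k z_k` with
`z_k = β₁ L_k⁻ᵀ B_k⁻ᵀ e₁`: the residual satisfies
`b - Aᵀu_k = -β_{k+1} q_{k+1} (e_kᵀ z_k)` and hence
`‖b - Aᵀu_k‖₂ = β_{k+1} |ζ_k|` where `ζ_k` is the last entry of `z_k`. -/
theorem nsCRAIG_residual
    {m n k : ℕ} (M : Matrix (Fin m) (Fin m) ℝ) (A : Matrix (Fin m) (Fin n) ℝ)
    (Q : Matrix (Fin n) (Fin (k + 1)) ℝ) (V : Matrix (Fin m) (Fin (k + 1)) ℝ)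
    (B H : Matrix (Fin (k + 1)) (Fin (k + 1)) ℝ)
    (b q : Fin n → ℝ) (β₁ βk1 : ℝ)
    (z : Fin (k + 1) → ℝ) (u : Fin m → ℝ)
    (hβ₁ : β₁ = Real.sqrt (b ⬝ᵥ b))
    (hb : b ≠ 0)
    (hq₁ : Q *ᵥ Pi.single (0 : Fin (k + 1)) β₁ = b)
    (hQQ : Qᵀ * Q = 1)
    (hq : q ⬝ᵥ q = 1)
    (hβk1 : 0 ≤ βk1)
    (hAQ : A * Q = M * V * B)
    (hAV : Aᵀ * V = Q * H +
      Matrix.of (fun i j => βk1 * q i * (if j = Fin.last k then (1 : ℝ) else 0)))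
    (hLdiag : ∀ i, (Vᵀ * M * V) i i = 1)
    (hLlow : ∀ i j : Fin (k + 1), i < j → (Vᵀ * M * V) i j = 0)
    (hLU : H = Bᵀ * (Vᵀ * M * V)ᵀ)
    (hBunit : IsUnit B)
    (hHunit : IsUnit H)
    (hz : z = β₁ • ((Vᵀ * M * V)ᵀ⁻¹ *ᵥ (Bᵀ⁻¹ *ᵥ Pi.single (0 : Fin (k + 1)) 1)))
    (hu : u = V *ᵥ z) :
    b - Aᵀ *ᵥ u = -((βk1 * z (Fin.last k)) • q) ∧
    Real.sqrt ((b - Aᵀ *ᵥ u) ⬝ᵥ (b - Aᵀ *ᵥ u)) = βk1 * |z (Fin.last k)| := by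
  set L : Matrix (Fin (k+1)) (Fin (k+1)) ℝ := (Vᵀ * M * V)ᵀ with hL
  -- L is a unit
  have hBT : IsUnit Bᵀ := by
    rw [Matrix.isUnit_iff_isUnit_det, Matrix.det_transpose,
      ← Matrix.isUnit_iff_isUnit_det]; exact hBunit
  have hLunit : IsUnit L := by
    have := hHunit
    rw [hLU, Matrix.isUnit_iff_isUnit_det, Matrix.det_mul, IsUnit.mul_iff] at this
    rw [Matrix.isUnit_iff_isUnit_det]
    exact this.2
  -- H *ᵥ z = β₁ • e₁
  have hHz : H *ᵥ z = Pi.single (0 : Fin (k+1)) β₁ := by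
    rw [hz, hLU, Matrix.mulVec_smul, Matrix.mulVec_mulVec, Matrix.mulVec_mulVec,
      Matrix.mul_assoc Bᵀ L, Matrix.mul_nonsing_inv L
        (by rwa [← Matrix.isUnit_iff_isUnit_det]),
      Matrix.mul_one, Matrix.mul_nonsing_inv Bᵀ
        (by rwa [← Matrix.isUnit_iff_isUnit_det]),
      Matrix.one_mulVec]
    ext i
    simp [Pi.single_apply]
  -- the rank-one term
  have hrank : (Matrix.of (fun i j => βk1 * q i * (if j = Fin.last k then (1 : ℝ) else 0))) *ᵥ z
      = (βk1 * z (Fin.last k)) • q := by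
    ext i
    simp only [Matrix.mulVec, dotProduct, Matrix.of_apply, Pi.smul_apply,
      smul_eq_mul]
    rw [Finset.sum_congr rfl (fun j _ => by
      rw [mul_ite, mul_one, mul_zero, ite_mul, zero_mul])]
    rw [Finset.sum_ite_eq' Finset.univ (Fin.last k) (fun j => βk1 * q i * z j)]
    simp [mul_comm, mul_assoc, mul_left_comm]
  have hAu : Aᵀ *ᵥ u = b + (βk1 * z (Fin.last k)) • q := by
    rw [hu, Matrix.mulVec_mulVec, hAV, Matrix.add_mulVec, ← Matrix.mulVec_mulVec,
      hHz, hq₁, hrank]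
  have h1 : b - Aᵀ *ᵥ u = -((βk1 * z (Fin.last k)) • q) := by
    rw [hAu]; abel
  refine ⟨h1, ?_⟩
  rw [h1]
  have : (-((βk1 * z (Fin.last k)) • q)) ⬝ᵥ (-((βk1 * z (Fin.last k)) • q))
      = (βk1 * z (Fin.last k))^2 := by
    rw [neg_dotProduct, dotProduct_neg, neg_neg,
      smul_dotProduct, dotProduct_smul, hq]
    simp only [smul_eq_mul, mul_one]; ring
  rw [this, Real.sqrt_sq_eq_abs, abs_mul, abs_of_nonneg hβk1]
end

section
/- The error e^{(k)} = u - u_k between the exact nsCRAIG solution u = V_n z_n and the k-th iterate u_k = V_k z_k satisfies e^{(k)} = V_n [Y; L_{n-k}^{-T}] x_{n-k}, and its energy norm satisfies ‖e^{(k)}‖_M² = (e^{(k)})ᵀ M e^{(k)} = x_{n-k}ᵀ L_{n-k}^{-T} x_{n-k}. -/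
open Matrix

/-- The error `e^{(k)} = u - u_k` between the exact nsCRAIG solution `u = V_n z_n`
and the k-th iterate `u_k = V_k z_k` satisfies
`e^{(k)} = V_n [Y; L_{n-k}⁻ᵀ] x_{n-k}` and
`‖e^{(k)}‖_M² = x_{n-k}ᵀ L_{n-k}⁻ᵀ x_{n-k}`. -/
theorem nsCRAIG_error_energy_norm
    {m k j : ℕ} (M : Matrix (Fin m) (Fin m) ℝ)
    (Vn : Matrix (Fin m) (Fin k ⊕ Fin j) ℝ)
    (Lk : Matrix (Fin k) (Fin k) ℝ) (Lnk : Matrix (Fin j) (Fin j) ℝ)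
    (Lnkk : Matrix (Fin j) (Fin k) ℝ)
    (xk : Fin k → ℝ) (xnk : Fin j → ℝ)
    (u uk : Fin m → ℝ)
    (hM : ∀ x : Fin m → ℝ, x ≠ 0 → 0 < x ⬝ᵥ (M *ᵥ x))
    (hLn : Vnᵀ * M * Vn = Matrix.fromBlocks Lk 0 Lnkk Lnk)
    (hLkdiag : ∀ i, Lk i i = 1)
    (hLklow : ∀ i i' : Fin k, i < i' → Lk i i' = 0)
    (hLnkdiag : ∀ i, Lnk i i = 1)
    (hLnklow : ∀ i i' : Fin j, i < i' → Lnk i i' = 0)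
    (hu : u = Vn *ᵥ ((Matrix.fromBlocks Lk 0 Lnkk Lnk)ᵀ⁻¹ *ᵥ Sum.elim xk xnk))
    (huk : uk = (fun r i => Vn r (Sum.inl i)) *ᵥ (Lkᵀ⁻¹ *ᵥ xk)) :
    u - uk =
      Vn *ᵥ Sum.elim ((-(Lkᵀ⁻¹ * Lnkkᵀ * Lnkᵀ⁻¹)) *ᵥ xnk) (Lnkᵀ⁻¹ *ᵥ xnk) ∧
    (u - uk) ⬝ᵥ (M *ᵥ (u - uk)) = xnk ⬝ᵥ (Lnkᵀ⁻¹ *ᵥ xnk) := by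
  -- determinants of the unit lower triangular blocks
  have hdLk : Lk.det = 1 := by
    rw [Matrix.det_of_lowerTriangular Lk (fun i i' h => hLklow i i' h)]
    simp [hLkdiag]
  have hdLnk : Lnk.det = 1 := by
    rw [Matrix.det_of_lowerTriangular Lnk (fun i i' h => hLnklow i i' h)]
    simp [hLnkdiag]
  have hLku : IsUnit Lkᵀ.det := by rw [Matrix.det_transpose, hdLk]; exact isUnit_one
  have hLnku : IsUnit Lnkᵀ.det := by rw [Matrix.det_transpose, hdLnk]; exact isUnit_one
  have hLk1 : Lkᵀ * Lkᵀ⁻¹ = 1 := Matrix.mul_nonsing_inv _ hLku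
  have hLnk1 : Lnkᵀ * Lnkᵀ⁻¹ = 1 := Matrix.mul_nonsing_inv _ hLnku
  set B : Matrix (Fin k) (Fin j) ℝ := -(Lkᵀ⁻¹ * Lnkkᵀ * Lnkᵀ⁻¹) with hB
  -- inverse of the block upper triangular transpose
  have hinv : (Matrix.fromBlocks Lk 0 Lnkk Lnk)ᵀ⁻¹ =
      Matrix.fromBlocks Lkᵀ⁻¹ B 0 Lnkᵀ⁻¹ := by
    apply Matrix.inv_eq_right_inv
    rw [Matrix.fromBlocks_transpose, Matrix.fromBlocks_multiply]
    have h2 : Lkᵀ * B + Lnkkᵀ * Lnkᵀ⁻¹ = 0 := by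
      rw [hB, Matrix.mul_neg, ← Matrix.mul_assoc, ← Matrix.mul_assoc, hLk1,
        Matrix.one_mul]
      simp [Matrix.mul_assoc]
    simp only [Matrix.transpose_zero, Matrix.mul_zero, Matrix.zero_mul, add_zero,
      zero_add, hLk1, hLnk1, h2]
    exact Matrix.fromBlocks_one
  -- the k-th iterate as Vn applied to an extended vector
  have huk' : uk = Vn *ᵥ Sum.elim (Lkᵀ⁻¹ *ᵥ xk) 0 := by
    rw [huk]; ext r
    simp [Matrix.mulVec, dotProduct, Fintype.sum_sum_type]
  set y : Fin j → ℝ := Lnkᵀ⁻¹ *ᵥ xnk with hy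
  have hvec : Sum.elim (Lkᵀ⁻¹ *ᵥ xk + B *ᵥ xnk) (0 *ᵥ xk + Lnkᵀ⁻¹ *ᵥ xnk)
      - Sum.elim (Lkᵀ⁻¹ *ᵥ xk) 0 = Sum.elim (B *ᵥ xnk) y := by
    funext i
    cases i <;> simp [hy, Matrix.zero_mulVec]
  have herr : u - uk = Vn *ᵥ Sum.elim (B *ᵥ xnk) y := by
    rw [hu, huk', hinv, Matrix.fromBlocks_mulVec, ← Matrix.mulVec_sub]
    simp only [Sum.elim_comp_inl, Sum.elim_comp_inr]
    rw [hvec]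
  refine ⟨herr, ?_⟩
  rw [herr]
  -- reduce the energy norm to a quadratic form in the block matrix
  have key : (Vn *ᵥ Sum.elim (B *ᵥ xnk) y) ⬝ᵥ (M *ᵥ (Vn *ᵥ Sum.elim (B *ᵥ xnk) y)) =
      Sum.elim (B *ᵥ xnk) y ⬝ᵥ
        (Matrix.fromBlocks Lk 0 Lnkk Lnk *ᵥ Sum.elim (B *ᵥ xnk) y) := by
    rw [Matrix.mulVec_mulVec, Matrix.dotProduct_mulVec, ← Matrix.vecMul_transpose,
      Matrix.vecMul_vecMul, ← Matrix.mul_assoc, hLn, ← Matrix.dotProduct_mulVec]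
  rw [key, Matrix.fromBlocks_mulVec, sumElim_dotProduct_sumElim]
  have hw1 : Lkᵀ *ᵥ (B *ᵥ xnk) = -(Lnkkᵀ *ᵥ y) := by
    rw [hB, Matrix.mulVec_mulVec, Matrix.mul_neg, ← Matrix.mul_assoc, ← Matrix.mul_assoc,
      hLk1, Matrix.one_mul, hy]
    simp [Matrix.mulVec_mulVec, Matrix.mul_assoc, Matrix.neg_mulVec]
  have h1 : (B *ᵥ xnk) ⬝ᵥ (Lk *ᵥ (B *ᵥ xnk)) = (-(Lnkkᵀ *ᵥ y)) ⬝ᵥ (B *ᵥ xnk) := by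
    rw [Matrix.dotProduct_mulVec, ← Matrix.mulVec_transpose, hw1]
  have h2 : y ⬝ᵥ (Lnkk *ᵥ (B *ᵥ xnk)) = (Lnkkᵀ *ᵥ y) ⬝ᵥ (B *ᵥ xnk) := by
    rw [Matrix.dotProduct_mulVec, ← Matrix.mulVec_transpose]
  have h3 : y ⬝ᵥ (Lnk *ᵥ y) = xnk ⬝ᵥ y := by
    rw [Matrix.dotProduct_mulVec, ← Matrix.mulVec_transpose, hy,
      Matrix.mulVec_mulVec, hLnk1, Matrix.one_mulVec]
  simp only [Sum.elim_comp_inl, Sum.elim_comp_inr, Matrix.zero_mulVec,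
    dotProduct_zero, add_zero]
  rw [dotProduct_add, h1, h2, h3]
  simp [neg_dotProduct]
end
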